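/- arXiv:1403.5652 — 4 statements merged into one kernel-verified Lean document; each statement's English description precedes it below -/
import Mathlib

section
/- Let A, B, C be affinely independent points in ℝ². For λ, μ, ν > 0, let L divide segment BC in ratio λ:1 (i.e., L = (B + λC)/(1+λ)), M divide CA in ratio μ:1, and N divide AB in ratio ν:1. Then the cevians AL, BM, CN pairwise intersect, and the triangle formed by their three pairwise intersection points has area equal to (λμν − 1)² / ((λμ + λ + 1)(μν + μ + 1)(νλ + ν + 1)) times the area of triangle ABC. -/
/-- det of two vectors in ℝ². -/
def detv (u v : ℝ × ℝ) : ℝ := u.1 * v.2 - u.2 * v.1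

/-- Area of a triangle in ℝ². -/
noncomputable def area3 (P Q R : ℝ × ℝ) : ℝ := |detv (Q - P) (R - P)| / 2

/-- The line through two points of ℝ². -/
def lineTh (P Q : ℝ × ℝ) : Set (ℝ × ℝ) := {X | ∃ t : ℝ, X = P + t • (Q - P)}

/-!
The cevians through `A` and `B` meet in the point with homogeneous barycentric coordinates
`(l m : 1 : l)`; cyclically, the other two intersection points are `(m : m n : 1)` and
`(1 : n : n l)`. For points with homogeneous barycentric coordinates `p, q, r` the signed area
`detv (Q - P) (R - P)` is `det (p, q, r) / (Σ p · Σ q · Σ r)` times `detv (B - A) (C - A)`,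
and here `det (p, q, r) = (l m n - 1)²`.
-/

lemma detv_smul_left (r : ℝ) (u v : ℝ × ℝ) : detv (r • u) v = r * detv u v := by
  simp only [detv, Prod.smul_fst, Prod.smul_snd, smul_eq_mul]; ring

lemma detv_self (v : ℝ × ℝ) : detv v v = 0 := by
  simp only [detv]; ring

lemma detv_sub_sub_rotate (A B C : ℝ × ℝ) : detv (C - B) (A - B) = detv (B - A) (C - A) := by
  simp only [detv, Prod.fst_sub, Prod.snd_sub]; ring

lemma eq_of_mem_lineTh_inter {P Q R S X Y : ℝ × ℝ} (h : detv (Q - P) (S - R) ≠ 0)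
    (hX : X ∈ lineTh P Q ∩ lineTh R S) (hY : Y ∈ lineTh P Q ∩ lineTh R S) : X = Y := by
  obtain ⟨⟨t, rfl⟩, s, hs⟩ := hX
  obtain ⟨⟨t', rfl⟩, s', hs'⟩ := hY
  have h₁ : (t - t') • (Q - P) = (s - s') • (S - R) := by
    linear_combination (norm := module) hs - hs'
  have h₂ : (t - t') * detv (Q - P) (S - R) = 0 := by
    rw [← detv_smul_left, h₁, detv_smul_left, detv_self, mul_zero]
  rw [sub_eq_zero.mp ((mul_eq_zero.mp h₂).resolve_right h)]

noncomputable def routhVertex (A B C : ℝ × ℝ) (l m : ℝ) : ℝ × ℝ :=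
  (l * m + l + 1)⁻¹ • ((l * m) • A + B + l • C)

lemma lineTh_inter_cevians {A B C L M : ℝ × ℝ} {l m : ℝ} (hABC : detv (B - A) (C - A) ≠ 0)
    (hL : L = (1 / (1 + l)) • B + (l / (1 + l)) • C)
    (hM : M = (1 / (1 + m)) • C + (m / (1 + m)) • A)
    (hl : 0 < l) (hm : 0 < m) :
    lineTh A L ∩ lineTh B M = {routhVertex A B C l m} := by
  have hmem : routhVertex A B C l m ∈ lineTh A L ∩ lineTh B M := by
    subst hL hM
    refine ⟨⟨(1 + l) / (l * m + l + 1), ?_⟩, ⟨l * (1 + m) / (l * m + l + 1), ?_⟩⟩ <;>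
    · ext <;> simp only [routhVertex, Prod.smul_fst, Prod.smul_snd, Prod.fst_add, Prod.snd_add,
        Prod.fst_sub, Prod.snd_sub, smul_eq_mul] <;> field_simp <;> ring
  have hdir : detv (L - A) (M - B)
      = (l * m + l + 1) / ((1 + l) * (1 + m)) * detv (B - A) (C - A) := by
    subst hL hM
    simp only [detv, Prod.smul_fst, Prod.smul_snd, Prod.fst_add, Prod.snd_add,
      Prod.fst_sub, Prod.snd_sub, smul_eq_mul]
    field_simp
    ring
  have hdir_ne : detv (L - A) (M - B) ≠ 0 := hdir ▸ mul_ne_zero (by positivity) hABC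
  exact Set.eq_singleton_iff_unique_mem.2 ⟨hmem, fun X hX ↦ eq_of_mem_lineTh_inter hdir_ne hX hmem⟩

lemma detv_sub_sub_of_barycentric {A B C P Q R : ℝ × ℝ} {p₁ p₂ p₃ q₁ q₂ q₃ r₁ r₂ r₃ s t u : ℝ}
    (hs : p₁ + p₂ + p₃ = s) (ht : q₁ + q₂ + q₃ = t) (hu : r₁ + r₂ + r₃ = u)
    (hs₀ : s ≠ 0) (ht₀ : t ≠ 0) (hu₀ : u ≠ 0)
    (hP : P = s⁻¹ • (p₁ • A + p₂ • B + p₃ • C)) (hQ : Q = t⁻¹ • (q₁ • A + q₂ • B + q₃ • C))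
    (hR : R = u⁻¹ • (r₁ • A + r₂ • B + r₃ • C)) :
    detv (Q - P) (R - P) =
      !![p₁, p₂, p₃; q₁, q₂, q₃; r₁, r₂, r₃].det / (s * t * u) * detv (B - A) (C - A) := by
  subst hP hQ hR hs ht hu
  rw [Matrix.det_fin_three]
  simp only [detv, smul_add, Prod.fst_sub, Prod.fst_add, Prod.smul_fst, smul_eq_mul, Prod.snd_sub,
    Prod.snd_add, Prod.smul_snd, Matrix.of_apply, Matrix.cons_val', Matrix.cons_val_zero,
    Matrix.cons_val_fin_one, Matrix.cons_val_one, Matrix.cons_val]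
  field_simp
  ring

lemma det_routh (l m n : ℝ) :
    !![l * m, 1, l; m, m * n, 1; 1, n, n * l].det = (l * m * n - 1) ^ 2 := by
  simp [Matrix.det_fin_three]
  ring

lemma area3_routhVertex (A B C : ℝ × ℝ) {l m n : ℝ} (hl : 0 < l) (hm : 0 < m) (hn : 0 < n) :
    area3 (routhVertex A B C l m) (routhVertex B C A m n) (routhVertex C A B n l) =
      (l * m * n - 1) ^ 2 / ((l * m + l + 1) * (m * n + m + 1) * (n * l + n + 1)) *
        area3 A B C := by
  have hdet := detv_sub_sub_of_barycentric (A := A) (B := B) (C := C)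
    (P := routhVertex A B C l m) (Q := routhVertex B C A m n) (R := routhVertex C A B n l)
    (p₁ := l * m) (p₂ := 1) (p₃ := l) (q₁ := m) (q₂ := m * n) (q₃ := 1)
    (r₁ := 1) (r₂ := n) (r₃ := n * l) (s := l * m + l + 1) (t := m * n + m + 1)
    (u := n * l + n + 1) (by ring) (by ring) (by ring) (by positivity) (by positivity)
    (by positivity) (by rw [routhVertex, one_smul]) (by rw [routhVertex]; module)
    (by rw [routhVertex]; module)
  rw [area3, area3, hdet, det_routh, abs_mul, abs_of_nonneg (by positivity), mul_div_assoc]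

/-- Routh–Steiner theorem. -/
theorem routh_steiner (A B C : ℝ × ℝ) (hABC : detv (B - A) (C - A) ≠ 0)
    (l m n : ℝ) (hl : 0 < l) (hm : 0 < m) (hn : 0 < n) (L M N : ℝ × ℝ)
    (hL : L = (1 / (1 + l)) • B + (l / (1 + l)) • C)
    (hM : M = (1 / (1 + m)) • C + (m / (1 + m)) • A)
    (hN : N = (1 / (1 + n)) • A + (n / (1 + n)) • B) :
    (∃ P, P ∈ lineTh A L ∩ lineTh B M) ∧
    (∃ Q, Q ∈ lineTh B M ∩ lineTh C N) ∧
    (∃ R, R ∈ lineTh C N ∩ lineTh A L) ∧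
    ∀ P Q R : ℝ × ℝ,
      P ∈ lineTh A L ∩ lineTh B M →
      Q ∈ lineTh B M ∩ lineTh C N →
      R ∈ lineTh C N ∩ lineTh A L →
      area3 P Q R =
        (l * m * n - 1) ^ 2 /
          ((l * m + l + 1) * (m * n + m + 1) * (n * l + n + 1)) * area3 A B C := by
  have hBCA : detv (C - B) (A - B) ≠ 0 := by rwa [detv_sub_sub_rotate]
  have hCAB : detv (A - C) (B - C) ≠ 0 := by rwa [detv_sub_sub_rotate, detv_sub_sub_rotate]
  have hP := lineTh_inter_cevians hABC hL hM hl hm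
  have hQ := lineTh_inter_cevians hBCA hM hN hm hn
  have hR := lineTh_inter_cevians hCAB hN hL hn hl
  simp only [hP, hQ, hR, Set.mem_singleton_iff, exists_eq, true_and]
  rintro P Q R rfl rfl rfl
  exact area3_routhVertex A B C hl hm hn
end

section
/- Let A, B, C be affinely independent points in ℝ², and λ, μ, ν > 0 with λμν = 1. Let L = (B + λC)/(1+λ), M = (C + μA)/(1+μ), N = (A + νB)/(1+ν). Then the three cevians AL, BM, CN are concurrent (Ceva's theorem as the degenerate case of Routh's theorem). -/
/-
The cevians meet at the centre of mass of the weights `1, n, n * l` placed at `A, B, C`. Each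
cevian foot is the centre of mass of the two weights on its side, because the ratios `1 : l`,
`n * l : 1 = 1 : m` and `1 : n` are the ratios of those weights (the middle one is where
`l * m * n = 1` enters), and the centre of mass of three weights lies on the line joining one
vertex to the centre of mass of the other two.
-/

section Barycentric

variable {k V : Type*} [Field k] [AddCommGroup V] [Module k V]

def baryPoint (a b c : k) (P Q R : V) : V := (a + b + c)⁻¹ • (a • P + b • Q + c • R)

theorem baryPoint_rotate (a b c : k) (P Q R : V) :
    baryPoint a b c P Q R = baryPoint b c a Q R P := by
  unfold baryPoint
  congr 1
  · ring
  · abel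

end Barycentric

theorem baryPoint_mem_lineTh (P Q R : ℝ × ℝ) {a b c r : ℝ} (hc : c = b * r) (hr : 1 + r ≠ 0)
    (habc : a + b + c ≠ 0) :
    baryPoint a b c P Q R ∈ lineTh P ((1 / (1 + r)) • Q + (r / (1 + r)) • R) := by
  refine ⟨(b + c) / (a + b + c), ?_⟩
  subst hc
  unfold baryPoint
  match_scalars <;> field_simp; ring

theorem ceva_concurrent_general (A B C : ℝ × ℝ)
    (l m n : ℝ) (hl : 0 < l) (hm : 0 < m) (hn : 0 < n) (hlmn : l * m * n = 1)
    (L M N : ℝ × ℝ)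
    (hL : L = (1 / (1 + l)) • B + (l / (1 + l)) • C)
    (hM : M = (1 / (1 + m)) • C + (m / (1 + m)) • A)
    (hN : N = (1 / (1 + n)) • A + (n / (1 + n)) • B) :
    ∃ X, X ∈ lineTh A L ∧ X ∈ lineTh B M ∧ X ∈ lineTh C N := by
  refine ⟨baryPoint 1 n (n * l) A B C, ?_, ?_, ?_⟩
  · rw [hL]
    exact baryPoint_mem_lineTh A B C rfl (by positivity) (by positivity)
  · rw [hM, baryPoint_rotate]
    exact baryPoint_mem_lineTh B C A (by linear_combination -hlmn) (by positivity) (by positivity)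
  · rw [hN, baryPoint_rotate, baryPoint_rotate]
    exact baryPoint_mem_lineTh C A B (one_mul n).symm (by positivity) (by positivity)

/-- Ceva's theorem as the degenerate case of Routh's theorem. -/
theorem ceva_concurrent (A B C : ℝ × ℝ) (hABC : detv (B - A) (C - A) ≠ 0)
    (l m n : ℝ) (hl : 0 < l) (hm : 0 < m) (hn : 0 < n) (hlmn : l * m * n = 1)
    (L M N : ℝ × ℝ)
    (hL : L = (1 / (1 + l)) • B + (l / (1 + l)) • C)
    (hM : M = (1 / (1 + m)) • C + (m / (1 + m)) • A)
    (hN : N = (1 / (1 + n)) • A + (n / (1 + n)) • B) :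
    ∃ X, X ∈ lineTh A L ∧ X ∈ lineTh B M ∧ X ∈ lineTh C N :=
  ceva_concurrent_general A B C l m n hl hm hn hlmn L M N hL hM hN
end

section
/- Let A₁, A₂, A₃ be affinely independent points in ℝ² and λ > 0. Divide each side in ratios 1:λ:1 (so each side has two division points at parameters 1/(λ+2) and (λ+1)/(λ+2)). Connect each division point to the opposite vertex, giving six cevians. The six consecutive pairwise intersections I, J, K, L, M, N of adjacent cevians (as in Routh-type configuration) form a hexagon whose area equals 2λ² / ((3+λ)(2λ+3)) times the area of triangle A₁A₂A₃. -/
/-! In homogeneous barycentric coordinates with respect to `A1 A2 A3` the vertices of the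
hexagon are `I = (1 : λ+1 : 1)`, `J = (1 : λ+1 : λ+1)` and their cyclic shifts
`K = (1 : 1 : λ+1)`, `L = (λ+1 : 1 : λ+1)`, `M = (λ+1 : 1 : 1)`, `N = (λ+1 : λ+1 : 1)`;
each is the only common point of its two cevians, which are not parallel. A triangle whose
vertices have coordinates `p, q, r` has `|det (p, q, r)| / (Σp Σq Σr)` times the area of
`A1 A2 A3`, and the fan `IJK, IKL, ILM, IMN` has determinants `λ², λ²(λ+2), λ²(λ+2), λ²`. -/

theorem lineTh_inter_subsingleton {P Q R S : ℝ × ℝ} (h : detv (Q - P) (S - R) ≠ 0) :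
    (lineTh P Q ∩ lineTh R S).Subsingleton := by
  rintro X ⟨⟨a, rfl⟩, ⟨b, hb⟩⟩ Y ⟨⟨a', rfl⟩, ⟨b', hb'⟩⟩
  simp only [Prod.ext_iff, Prod.fst_add, Prod.snd_add, Prod.fst_sub, Prod.snd_sub,
    Prod.smul_fst, Prod.smul_snd, smul_eq_mul] at hb hb'
  have : (a - a') * detv (Q - P) (S - R) = 0 := by
    simp only [detv, Prod.fst_sub, Prod.snd_sub]
    linear_combination (S.2 - R.2) * (hb.1 - hb'.1) - (S.1 - R.1) * (hb.2 - hb'.2)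
  obtain rfl : a = a' := sub_eq_zero.1 ((mul_eq_zero.1 this).resolve_right h)
  rfl

theorem detv_sub_rotate (A B C : ℝ × ℝ) : detv (B - A) (C - A) = detv (C - B) (A - B) := by
  simp only [detv, Prod.fst_sub, Prod.snd_sub]
  ring

/-- The point with homogeneous barycentric coordinates `(a : b : c)`; junk when `a + b + c = 0`. -/
noncomputable def bary (A1 A2 A3 : ℝ × ℝ) (a b c : ℝ) : ℝ × ℝ :=
  (a + b + c)⁻¹ • (a • A1 + b • A2 + c • A3)

theorem bary_rotate (A1 A2 A3 : ℝ × ℝ) (a b c : ℝ) :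
    bary A2 A3 A1 a b c = bary A1 A2 A3 c a b := by
  rw [bary, bary, show c + a + b = a + b + c by ring]
  congr 1
  abel

theorem area3_bary {A1 A2 A3 : ℝ × ℝ} {a b c a' b' c' a'' b'' c'' : ℝ} (h : a + b + c ≠ 0)
    (h' : a' + b' + c' ≠ 0) (h'' : a'' + b'' + c'' ≠ 0) :
    area3 (bary A1 A2 A3 a b c) (bary A1 A2 A3 a' b' c') (bary A1 A2 A3 a'' b'' c'') =
      |!![a, b, c; a', b', c'; a'', b'', c''].det /
        ((a + b + c) * (a' + b' + c') * (a'' + b'' + c''))| * area3 A1 A2 A3 := by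
  have hdetv : detv (bary A1 A2 A3 a' b' c' - bary A1 A2 A3 a b c)
      (bary A1 A2 A3 a'' b'' c'' - bary A1 A2 A3 a b c) =
      !![a, b, c; a', b', c'; a'', b'', c''].det /
        ((a + b + c) * (a' + b' + c') * (a'' + b'' + c'')) * detv (A2 - A1) (A3 - A1) := by
    simp only [detv, bary, Matrix.det_fin_three, Matrix.of_apply, Matrix.cons_val',
      Matrix.cons_val_zero, Matrix.cons_val_one, Matrix.cons_val_two, Matrix.empty_val',
      Matrix.cons_val_fin_one, Matrix.head_cons, Matrix.tail_cons, Matrix.head_fin_const,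
      Prod.fst_add, Prod.snd_add, Prod.fst_sub, Prod.snd_sub, Prod.smul_fst, Prod.smul_snd,
      smul_eq_mul]
    field_simp
    ring
  rw [area3, area3, hdetv, abs_mul, mul_div_assoc]

section Cevians

variable {A1 A2 A3 X : ℝ × ℝ} {l : ℝ}

theorem eq_bary_of_mem_cevians_I (hind : detv (A2 - A1) (A3 - A1) ≠ 0) (hl : 0 < l)
    (hX : X ∈ lineTh A1 (((l + 1) / (l + 2)) • A2 + (1 / (l + 2)) • A3) ∩
      lineTh A3 ((1 / (l + 2)) • A1 + ((l + 1) / (l + 2)) • A2)) :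
    X = bary A1 A2 A3 1 (l + 1) 1 := by
  have hpar : detv ((((l + 1) / (l + 2)) • A2 + (1 / (l + 2)) • A3) - A1)
      (((1 / (l + 2)) • A1 + ((l + 1) / (l + 2)) • A2) - A3) =
      -((l + 1) * (l + 3) / (l + 2) ^ 2 * detv (A2 - A1) (A3 - A1)) := by
    simp only [detv, Prod.fst_add, Prod.snd_add, Prod.fst_sub, Prod.snd_sub, Prod.smul_fst,
      Prod.smul_snd, smul_eq_mul]
    field_simp
    ring
  refine lineTh_inter_subsingleton ?_ hX
    ⟨⟨(l + 2) / (l + 3), ?_⟩, ⟨(l + 2) / (l + 3), ?_⟩⟩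
  · rw [hpar, neg_ne_zero]
    exact mul_ne_zero (by positivity) hind
  all_goals
    ext <;> simp only [bary, Prod.fst_add, Prod.snd_add, Prod.fst_sub, Prod.snd_sub,
      Prod.smul_fst, Prod.smul_snd, smul_eq_mul] <;> field_simp <;> ring

theorem eq_bary_of_mem_cevians_J (hind : detv (A2 - A1) (A3 - A1) ≠ 0) (hl : 0 < l)
    (hX : X ∈ lineTh A2 (((l + 1) / (l + 2)) • A3 + (1 / (l + 2)) • A1) ∩
      lineTh A3 ((1 / (l + 2)) • A1 + ((l + 1) / (l + 2)) • A2)) :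
    X = bary A1 A2 A3 1 (l + 1) (l + 1) := by
  have hpar : detv ((((l + 1) / (l + 2)) • A3 + (1 / (l + 2)) • A1) - A2)
      (((1 / (l + 2)) • A1 + ((l + 1) / (l + 2)) • A2) - A3) =
      (2 * l + 3) / (l + 2) ^ 2 * detv (A2 - A1) (A3 - A1) := by
    simp only [detv, Prod.fst_add, Prod.snd_add, Prod.fst_sub, Prod.snd_sub, Prod.smul_fst,
      Prod.smul_snd, smul_eq_mul]
    field_simp
    ring
  refine lineTh_inter_subsingleton ?_ hX
    ⟨⟨(l + 2) / (2 * l + 3), ?_⟩, ⟨(l + 2) / (2 * l + 3), ?_⟩⟩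
  · rw [hpar]
    exact mul_ne_zero (by positivity) hind
  all_goals
    ext <;> simp only [bary, Prod.fst_add, Prod.snd_add, Prod.fst_sub, Prod.snd_sub,
      Prod.smul_fst, Prod.smul_snd, smul_eq_mul] <;> field_simp <;> ring

end Cevians

theorem area3_hexagon (A1 A2 A3 : ℝ × ℝ) {l : ℝ} (hl : 0 < l) :
    area3 (bary A1 A2 A3 1 (l + 1) 1) (bary A1 A2 A3 1 (l + 1) (l + 1))
        (bary A1 A2 A3 1 1 (l + 1)) +
      area3 (bary A1 A2 A3 1 (l + 1) 1) (bary A1 A2 A3 1 1 (l + 1))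
        (bary A1 A2 A3 (l + 1) 1 (l + 1)) +
      area3 (bary A1 A2 A3 1 (l + 1) 1) (bary A1 A2 A3 (l + 1) 1 (l + 1))
        (bary A1 A2 A3 (l + 1) 1 1) +
      area3 (bary A1 A2 A3 1 (l + 1) 1) (bary A1 A2 A3 (l + 1) 1 1)
        (bary A1 A2 A3 (l + 1) (l + 1) 1) =
      2 * l ^ 2 / ((3 + l) * (2 * l + 3)) * area3 A1 A2 A3 := by
  obtain ⟨hdet_IJK, hdet_IKL, hdet_ILM, hdet_IMN⟩ :
      !![1, l + 1, 1; 1, l + 1, l + 1; 1, 1, l + 1].det = l ^ 2 ∧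
      !![1, l + 1, 1; 1, 1, l + 1; l + 1, 1, l + 1].det = l ^ 2 * (l + 2) ∧
      !![1, l + 1, 1; l + 1, 1, l + 1; l + 1, 1, 1].det = l ^ 2 * (l + 2) ∧
      !![1, l + 1, 1; l + 1, 1, 1; l + 1, l + 1, 1].det = l ^ 2 := by
    refine ⟨?_, ?_, ?_, ?_⟩ <;>
      simp only [Matrix.det_fin_three, Matrix.of_apply, Matrix.cons_val', Matrix.cons_val_zero,
        Matrix.cons_val_one, Matrix.cons_val, Matrix.cons_val_fin_one] <;>
      ring
  rw [area3_bary, area3_bary, area3_bary, area3_bary, hdet_IJK, hdet_IKL, hdet_ILM, hdet_IMN,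
    abs_of_pos, abs_of_pos, abs_of_pos, abs_of_pos]
  · field_simp
    ring
  all_goals positivity

/-- Dividing each side of a triangle in ratios 1 : λ : 1 and joining the division
points to the opposite vertices yields a central hexagon of area
2λ²/((3+λ)(2λ+3)) times the triangle's area. -/
theorem hexagon_one_lambda_one (A1 A2 A3 : ℝ × ℝ)
    (hind : detv (A2 - A1) (A3 - A1) ≠ 0) (l : ℝ) (hl : 0 < l)
    (A11 A12 A21 A22 A31 A32 : ℝ × ℝ)
    (hA11 : A11 = ((l + 1) / (l + 2)) • A2 + (1 / (l + 2)) • A3)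
    (hA12 : A12 = (1 / (l + 2)) • A2 + ((l + 1) / (l + 2)) • A3)
    (hA21 : A21 = ((l + 1) / (l + 2)) • A3 + (1 / (l + 2)) • A1)
    (hA22 : A22 = (1 / (l + 2)) • A3 + ((l + 1) / (l + 2)) • A1)
    (hA31 : A31 = ((l + 1) / (l + 2)) • A1 + (1 / (l + 2)) • A2)
    (hA32 : A32 = (1 / (l + 2)) • A1 + ((l + 1) / (l + 2)) • A2)
    (I J K L M N : ℝ × ℝ)
    (hI : I ∈ lineTh A1 A11 ∩ lineTh A3 A32)
    (hJ : J ∈ lineTh A2 A21 ∩ lineTh A3 A32)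
    (hK : K ∈ lineTh A2 A21 ∩ lineTh A1 A12)
    (hL : L ∈ lineTh A3 A31 ∩ lineTh A1 A12)
    (hM : M ∈ lineTh A2 A22 ∩ lineTh A3 A31)
    (hN : N ∈ lineTh A1 A11 ∩ lineTh A2 A22) :
    area3 I J K + area3 I K L + area3 I L M + area3 I M N =
      2 * l ^ 2 / ((3 + l) * (2 * l + 3)) * area3 A1 A2 A3 := by
  subst hA11 hA12 hA21 hA22 hA31 hA32
  -- `K, M` are the `I` and `L, N` the `J` of the rotated triangles `A2 A3 A1` and `A3 A1 A2`.
  have hind₂ : detv (A3 - A2) (A1 - A2) ≠ 0 := by rwa [← detv_sub_rotate]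
  have hind₃ : detv (A1 - A3) (A2 - A3) ≠ 0 := by rwa [← detv_sub_rotate, ← detv_sub_rotate]
  obtain rfl := eq_bary_of_mem_cevians_I hind hl hI
  obtain rfl := eq_bary_of_mem_cevians_I hind₂ hl hK
  obtain rfl := eq_bary_of_mem_cevians_I hind₃ hl (Set.inter_comm _ _ ▸ hM)
  obtain rfl := eq_bary_of_mem_cevians_J hind hl hJ
  obtain rfl := eq_bary_of_mem_cevians_J hind₂ hl hL
  obtain rfl := eq_bary_of_mem_cevians_J hind₃ hl hN
  simp only [bary_rotate A1 A2 A3, bary_rotate A2 A3 A1]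
  exact area3_hexagon A1 A2 A3 hl
end

section
/- Let ABCD be a parallelogram in ℝ² (i.e., B − A = C − D, with A, B, C affinely independent). For λ > 0, let K divide BC in ratio λ:1, L divide CD in ratio λ:1, M divide DA in ratio λ:1, and N divide AB in ratio λ:1. Then the four cevians AK, BL, CM, DN bound a quadrilateral whose area is 1/(2λ² + 2λ + 1) times the area of ABCD. -/
def frame (O u v p : ℝ × ℝ) : ℝ × ℝ := O + p.1 • u + p.2 • v

section Frame

variable (O u v : ℝ × ℝ)

lemma frame_sub_frame (p q : ℝ × ℝ) :
    frame O u v p - frame O u v q = (p - q).1 • u + (p - q).2 • v := by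
  ext <;> simp only [frame, Prod.fst_sub, Prod.snd_sub, Prod.fst_add, Prod.snd_add,
    Prod.smul_fst, Prod.smul_snd, smul_eq_mul] <;> ring

lemma detv_smul_add_smul (a b c e : ℝ) :
    detv (a • u + b • v) (c • u + e • v) = detv (a, b) (c, e) * detv u v := by
  simp only [detv, Prod.fst_add, Prod.snd_add, Prod.smul_fst, Prod.smul_snd, smul_eq_mul]
  ring

lemma detv_frame_sub_frame (p q r s : ℝ × ℝ) :
    detv (frame O u v q - frame O u v p) (frame O u v s - frame O u v r) =
      detv (q - p) (s - r) * detv u v := by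
  rw [frame_sub_frame, frame_sub_frame, detv_smul_add_smul]

lemma area3_frame (p q r : ℝ × ℝ) :
    area3 (frame O u v p) (frame O u v q) (frame O u v r) = area3 p q r * |detv u v| := by
  rw [area3, area3, detv_frame_sub_frame, abs_mul, div_mul_eq_mul_div]

lemma smul_frame_add_smul_frame {a b : ℝ} (hab : a + b = 1) (p q : ℝ × ℝ) :
    a • frame O u v p + b • frame O u v q = frame O u v (a • p + b • q) := by
  obtain rfl := eq_sub_of_add_eq' hab
  ext <;> simp only [frame, Prod.fst_add, Prod.snd_add, Prod.smul_fst, Prod.smul_snd,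
    smul_eq_mul] <;> ring

lemma frame_mem_lineTh {p q x : ℝ × ℝ} (hx : x ∈ lineTh p q) :
    frame O u v x ∈ lineTh (frame O u v p) (frame O u v q) := by
  obtain ⟨t, rfl⟩ := hx
  refine ⟨t, ?_⟩
  ext <;> simp only [frame, Prod.fst_add, Prod.snd_add, Prod.fst_sub, Prod.snd_sub,
    Prod.smul_fst, Prod.smul_snd, smul_eq_mul] <;> ring

end Frame

def IsCrossing (p q r s x : ℝ × ℝ) : Prop :=
  detv (q - p) (s - r) ≠ 0 ∧ x ∈ lineTh p q ∩ lineTh r s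

namespace IsCrossing

variable {p q r s x : ℝ × ℝ}

lemma eq_of_mem (h : IsCrossing p q r s x) {y : ℝ × ℝ} (hy : y ∈ lineTh p q ∩ lineTh r s) :
    y = x := by
  obtain ⟨hpar, ⟨a', rfl⟩, b', hb'⟩ := h
  obtain ⟨⟨a, rfl⟩, b, hb⟩ := hy
  suffices (a - a') * detv (q - p) (s - r) = 0 by
    rw [sub_eq_zero.1 ((mul_eq_zero.1 this).resolve_right hpar)]
  have h1 := congrArg Prod.fst hb
  have h2 := congrArg Prod.snd hb
  have h1' := congrArg Prod.fst hb'
  have h2' := congrArg Prod.snd hb'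
  simp only [detv, Prod.fst_add, Prod.snd_add, Prod.fst_sub, Prod.snd_sub,
    Prod.smul_fst, Prod.smul_snd, smul_eq_mul] at h1 h2 h1' h2' ⊢
  linear_combination (s.2 - r.2) * (h1 - h1') - (s.1 - r.1) * (h2 - h2')

lemma map_frame (h : IsCrossing p q r s x) {O u v : ℝ × ℝ} (huv : detv u v ≠ 0) :
    IsCrossing (frame O u v p) (frame O u v q) (frame O u v r) (frame O u v s)
      (frame O u v x) :=
  ⟨by rw [detv_frame_sub_frame]; exact mul_ne_zero h.1 huv,
    frame_mem_lineTh O u v h.2.1, frame_mem_lineTh O u v h.2.2⟩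

end IsCrossing

section UnitSquare

def sqA : ℝ × ℝ := (0, 0)
def sqB : ℝ × ℝ := (1, 0)
def sqC : ℝ × ℝ := (1, 1)
def sqD : ℝ × ℝ := (0, 1)

variable (l : ℝ)

noncomputable def sqK : ℝ × ℝ := (1 / (1 + l)) • sqB + (l / (1 + l)) • sqC
noncomputable def sqL : ℝ × ℝ := (1 / (1 + l)) • sqC + (l / (1 + l)) • sqD
noncomputable def sqM : ℝ × ℝ := (1 / (1 + l)) • sqD + (l / (1 + l)) • sqA
noncomputable def sqN : ℝ × ℝ := (1 / (1 + l)) • sqA + (l / (1 + l)) • sqB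

noncomputable def sqX : ℝ × ℝ := (2 * l ^ 2 + 2 * l + 1)⁻¹ • (l ^ 2 + l + 1, (1 + l) ^ 2)
noncomputable def sqY : ℝ × ℝ := (2 * l ^ 2 + 2 * l + 1)⁻¹ • (l ^ 2, l ^ 2 + l + 1)
noncomputable def sqZ : ℝ × ℝ := (2 * l ^ 2 + 2 * l + 1)⁻¹ • (l ^ 2 + l, l ^ 2)
noncomputable def sqW : ℝ × ℝ := (2 * l ^ 2 + 2 * l + 1)⁻¹ • ((1 + l) ^ 2, l ^ 2 + l)

variable {l}

lemma isCrossing_sq_cevians (hl : 1 + l ≠ 0) :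
    IsCrossing sqB (sqL l) sqC (sqM l) (sqX l) ∧ IsCrossing sqC (sqM l) sqD (sqN l) (sqY l) ∧
      IsCrossing sqD (sqN l) sqA (sqK l) (sqZ l) ∧ IsCrossing sqA (sqK l) sqB (sqL l) (sqW l) := by
  -- written in the shape `field_simp` normalizes the denominator to
  have hs : 2 * l * (l + 1) + 1 ≠ 0 := by nlinarith [sq_nonneg l, sq_nonneg (1 + l)]
  -- by the quarter-turn symmetry, each crossing point sits at the same parameters on its cevians
  obtain ⟨t₁, ht₁⟩ : ∃ t, t = (1 + l) ^ 2 / (2 * l ^ 2 + 2 * l + 1) := ⟨_, rfl⟩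
  obtain ⟨t₂, ht₂⟩ : ∃ t, t = l * (1 + l) / (2 * l ^ 2 + 2 * l + 1) := ⟨_, rfl⟩
  refine ⟨⟨?_, ⟨t₁, ?_⟩, t₂, ?_⟩, ⟨?_, ⟨t₁, ?_⟩, t₂, ?_⟩, ⟨?_, ⟨t₁, ?_⟩, t₂, ?_⟩,
    ⟨?_, ⟨t₁, ?_⟩, t₂, ?_⟩⟩
  all_goals subst ht₁ ht₂
  all_goals simp only [detv, sqX, sqY, sqZ, sqW, sqA, sqB, sqC, sqD, sqK, sqL, sqM, sqN,
    Prod.smul_mk, Prod.mk_add_mk, Prod.mk_sub_mk, smul_eq_mul, Prod.mk.injEq]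
  any_goals (intro h; field_simp at h; nlinarith [sq_nonneg l, sq_nonneg (1 + l)])
  all_goals constructor <;> field_simp <;> ring

lemma area_sq_cevian_quadrilateral :
    area3 (sqX l) (sqY l) (sqZ l) + area3 (sqZ l) (sqW l) (sqX l) =
      1 / (2 * l ^ 2 + 2 * l + 1) := by
  have hs : 2 * l * (l + 1) + 1 ≠ 0 := by nlinarith [sq_nonneg l, sq_nonneg (1 + l)]
  have hXYZ : detv (sqY l - sqX l) (sqZ l - sqX l) = 1 / (2 * l ^ 2 + 2 * l + 1) := by
    simp only [detv, sqX, sqY, sqZ, Prod.smul_mk, Prod.mk_sub_mk, smul_eq_mul]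
    field_simp
    ring
  have hZWX : detv (sqW l - sqZ l) (sqX l - sqZ l) = 1 / (2 * l ^ 2 + 2 * l + 1) := by
    simp only [detv, sqX, sqZ, sqW, Prod.smul_mk, Prod.mk_sub_mk, smul_eq_mul]
    field_simp
    ring
  have hpos : 0 < 1 / (2 * l ^ 2 + 2 * l + 1) := by
    apply one_div_pos.2; nlinarith [sq_nonneg l, sq_nonneg (1 + l)]
  rw [area3, area3, hXYZ, hZWX, abs_of_pos hpos]
  ring

end UnitSquare

/-- Routh–Steiner for parallelograms with equal division ratios λ:1:
the cevian quadrilateral has area 1/(2λ²+2λ+1) times the parallelogram. -/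
theorem parallelogram_equal_ratio (A B C D : ℝ × ℝ)
    (hpar : B - A = C - D) (hind : detv (B - A) (C - A) ≠ 0)
    (l : ℝ) (hl : 0 < l) (K L M N : ℝ × ℝ)
    (hK : K = (1 / (1 + l)) • B + (l / (1 + l)) • C)
    (hL : L = (1 / (1 + l)) • C + (l / (1 + l)) • D)
    (hM : M = (1 / (1 + l)) • D + (l / (1 + l)) • A)
    (hN : N = (1 / (1 + l)) • A + (l / (1 + l)) • B)
    (X Y Z W : ℝ × ℝ)
    (hX : X ∈ lineTh B L ∩ lineTh C M)
    (hY : Y ∈ lineTh C M ∩ lineTh D N)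
    (hZ : Z ∈ lineTh D N ∩ lineTh A K)
    (hW : W ∈ lineTh A K ∩ lineTh B L) :
    area3 X Y Z + area3 Z W X =
      1 / (2 * l ^ 2 + 2 * l + 1) * |detv (B - A) (D - A)| := by
  have hl₁ : 1 / (1 + l) + l / (1 + l) = 1 := by field_simp
  set F := frame A (B - A) (D - A)
  have hA : A = F sqA := by simp [F, frame, sqA]
  have hB : B = F sqB := by simp [F, frame, sqB]
  have hD : D = F sqD := by simp [F, frame, sqD]
  have hC : C = F sqC := by
    simp only [F, frame, sqC, one_smul]
    rw [hpar]
    abel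
  have hd : detv (B - A) (D - A) ≠ 0 := by
    rw [hA, hB, hC, detv_frame_sub_frame] at hind
    simpa [detv, sqA, sqB, sqC] using hind
  replace hK : K = F (sqK l) := by rw [hK, hB, hC, smul_frame_add_smul_frame _ _ _ hl₁]; rfl
  replace hL : L = F (sqL l) := by rw [hL, hC, hD, smul_frame_add_smul_frame _ _ _ hl₁]; rfl
  replace hM : M = F (sqM l) := by rw [hM, hD, hA, smul_frame_add_smul_frame _ _ _ hl₁]; rfl
  replace hN : N = F (sqN l) := by rw [hN, hA, hB, smul_frame_add_smul_frame _ _ _ hl₁]; rfl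
  obtain ⟨hX₀, hY₀, hZ₀, hW₀⟩ := isCrossing_sq_cevians (l := l) (by positivity)
  simp only [hA, hB, hC, hD, hK, hL, hM, hN] at hX hY hZ hW
  rw [(hX₀.map_frame hd).eq_of_mem hX, (hY₀.map_frame hd).eq_of_mem hY,
    (hZ₀.map_frame hd).eq_of_mem hZ, (hW₀.map_frame hd).eq_of_mem hW, area3_frame, area3_frame,
    ← add_mul, area_sq_cevian_quadrilateral]
end
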